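/- Let K be a field of characteristic p, let M be a set, G a group of bijections of M under composition, g ∈ G, and write h = g - id in the sense that for maps into a K-vector space h(x) := g(x) - x. Suppose the p−1 functions (h - h∘g^{-1}), (h - h∘g^{-1})∘g^2, ..., (h - h∘g^{-1})∘g^{p-1} are K-linearly independent (in particular nonzero). Then g^p ≠ id. -/

import Mathlib

/-- If the p-1 functions (h - h∘g⁻¹), (h - h∘g⁻¹)∘g², ..., (h - h∘g⁻¹)∘g^{p-1}
are K-linearly independent (as functions on M), then g^p ≠ id on M. -/
theorem gp_ne_id_of_linearIndependent {K : Type*} [Field K] (p : ℕ) [Fact p.Prime]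
    [CharP K p] {X : Type*} [AddCommGroup X] [Module K X]
    (M : Set X) (g : X ≃ X)
    (hg : Set.MapsTo g M M) (hg' : Set.MapsTo g.symm M M)
    (h : X → X) (hh : ∀ x, h x = g x - x)
    (d : X → X) (hd : ∀ x, d x = h x - h (g.symm x))
    (F : Fin (p - 1) → (M → X))
    (hF : ∀ (i : Fin (p - 1)) (x : M),
      F i x = d ((⇑g)^[if (i : ℕ) = 0 then 0 else (i : ℕ) + 1] (x : X)))
    (hind : LinearIndependent K F) :
    ∃ x ∈ M, (⇑g)^[p] x ≠ x := by
  by_contra hcon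
  push_neg at hcon
  have hp : p.Prime := Fact.out
  have hp2 : 2 ≤ p := hp.two_le
  haveI : NeZero p := ⟨hp.ne_zero⟩
  haveI : Fact (1 < p) := ⟨hp.one_lt⟩
  -- the natural index of each F i
  set κ : Fin (p - 1) → ℕ := fun i => if (i : ℕ) = 0 then 0 else (i : ℕ) + 1 with hκ
  have hκlt : ∀ i, κ i < p := by
    intro i
    have := i.isLt
    simp only [hκ]
    split <;> omega
  -- coefficients
  set c : Fin (p - 1) → K := fun i => (κ i : K) - 1 with hc
  set φ : ZMod p →+* K := ZMod.castHom dvd_rfl K with hφ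
  have hsum : ∑ i, c i • F i = 0 := by
    funext x
    obtain ⟨x, hxM⟩ := x
    have hx : (⇑g)^[p] x = x := hcon x hxM
    simp only [Finset.sum_apply, Pi.smul_apply, Pi.zero_apply]
    -- abbreviations
    set A : ZMod p → X := fun k => h ((⇑g)^[k.val] x) with hA
    have hFx : ∀ i, F i (⟨x, hxM⟩ : M) = d ((⇑g)^[κ i] x) := fun i => hF i _
    -- step a : d (g^[k.val] x) = A k - A (k - 1)
    have stepa : ∀ k : ZMod p, d ((⇑g)^[k.val] x) = A k - A (k - 1) := by
      intro k
      rw [hd]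
      congr 1
      rcases Nat.eq_zero_or_pos k.val with h0 | h1
      · -- k = 0
        have hk0 : k = 0 := by
          have : ((k.val : ℕ) : ZMod p) = k := by
            rw [ZMod.natCast_val, ZMod.cast_id]
          rw [← this, h0, Nat.cast_zero]
        have hgs : g.symm ((⇑g)^[k.val] x) = (⇑g)^[p - 1] x := by
          rw [h0]
          simp only [Function.iterate_zero, id_eq]
          conv_lhs => rw [← hx]
          have : p = (p - 1) + 1 := by omega
          rw [this, Function.iterate_succ_apply' g]
          exact g.symm_apply_apply _
        rw [hgs, hk0]
        have : ((0 : ZMod p) - 1) = ((p - 1 : ℕ) : ZMod p) := by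
          have : ((p : ℕ) : ZMod p) = 0 := ZMod.natCast_self p
          rw [zero_sub]
          rw [show ((p - 1 : ℕ) : ZMod p) = ((p : ℕ) : ZMod p) - 1 by
            push_cast [Nat.cast_sub (by omega : 1 ≤ p)]; ring]
          rw [this, zero_sub]
        rw [this, hA]
        simp only
        rw [ZMod.val_natCast_of_lt (by omega : p - 1 < p)]
      · -- k.val ≥ 1
        have hgs : g.symm ((⇑g)^[k.val] x) = (⇑g)^[k.val - 1] x := by
          have : k.val = (k.val - 1) + 1 := by omega
          rw [this, Function.iterate_succ_apply' g]
          exact g.symm_apply_apply _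
        rw [hgs]
        have hk1 : (k - 1 : ZMod p) = ((k.val - 1 : ℕ) : ZMod p) := by
          have hkc : ((k.val : ℕ) : ZMod p) = k := by
            rw [ZMod.natCast_val, ZMod.cast_id]
          rw [show ((k.val - 1 : ℕ) : ZMod p) = ((k.val : ℕ) : ZMod p) - 1 by
            push_cast [Nat.cast_sub (by omega : 1 ≤ k.val)]; ring, hkc]
        rw [hk1, hA]
        simp only
        rw [ZMod.val_natCast_of_lt (by have := k.val_lt; omega : k.val - 1 < p)]
    -- step b : ∑ A k = 0
    have stepb : ∑ k : ZMod p, A k = 0 := by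
      have hbij : ∑ k : ZMod p, A k = ∑ n ∈ Finset.range p, h ((⇑g)^[n] x) := by
        refine Finset.sum_nbij' (i := fun k : ZMod p => k.val)
          (j := fun n : ℕ => (n : ZMod p)) ?_ ?_ ?_ ?_ ?_
        · intro k _; exact Finset.mem_range.mpr k.val_lt
        · intro n _; exact Finset.mem_univ _
        · intro k _
          show ((k.val : ℕ) : ZMod p) = k
          rw [ZMod.natCast_val, ZMod.cast_id]
        · intro n hn
          exact ZMod.val_natCast_of_lt (Finset.mem_range.mp hn)
        · intro k _; rfl
      rw [hbij]
      have : ∀ n, h ((⇑g)^[n] x) = (⇑g)^[n + 1] x - (⇑g)^[n] x := by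
        intro n
        rw [hh, Function.iterate_succ_apply' g]
      simp_rw [this]
      rw [Finset.sum_range_sub (fun n => (⇑g)^[n] x)]
      rw [hx]
      simp
    -- step c : the weighted sum vanishes
    have stepc : ∑ k : ZMod p, (φ k - 1) • (A k - A (k - 1)) = 0 := by
      have expand : ∑ k : ZMod p, (φ k - 1) • (A k - A (k - 1)) =
          (∑ k : ZMod p, (φ k - 1) • A k) - ∑ k : ZMod p, (φ k - 1) • A (k - 1) := by
        rw [← Finset.sum_sub_distrib]
        congr 1; funext k; rw [smul_sub]
      have reidx : ∑ k : ZMod p, (φ k - 1) • A (k - 1) =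
          ∑ k : ZMod p, (φ (k + 1) - 1) • A k := by
        rw [← Equiv.sum_comp (Equiv.addRight (1 : ZMod p))
          (fun k => (φ k - 1) • A (k - 1))]
        congr 1; funext k
        simp [Equiv.coe_addRight, add_sub_cancel_right]
      rw [expand, reidx, ← Finset.sum_sub_distrib]
      have : ∀ k : ZMod p, (φ k - 1) • A k - (φ (k + 1) - 1) • A k = -(A k) := by
        intro k
        rw [← sub_smul]
        have : (φ k - 1) - (φ (k + 1) - 1) = -1 := by
          rw [map_add, map_one]; ring
        rw [this, neg_one_smul]
      simp_rw [this]
      rw [Finset.sum_neg_distrib, stepb, neg_zero]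
    -- step d : reindex the F-sum to the ZMod p sum
    have stepd : ∑ i, c i • F i (⟨x, hxM⟩ : M) =
        ∑ k : ZMod p, (φ k - 1) • (A k - A (k - 1)) := by
      have hone : ((φ (1 : ZMod p) - 1) • (A 1 - A (1 - 1)) : X) = 0 := by
        rw [map_one, sub_self, zero_smul]
      rw [← Finset.sum_erase (f := fun k : ZMod p => (φ k - 1) • (A k - A (k - 1)))
        (a := 1) Finset.univ hone]
      refine Finset.sum_nbij' (i := fun i : Fin (p - 1) => ((κ i : ℕ) : ZMod p))
        (j := fun k : ZMod p => (⟨if k.val = 0 then 0 else k.val - 1, by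
          have := k.val_lt; split <;> omega⟩ : Fin (p - 1))) ?_ ?_ ?_ ?_ ?_
      · intro i _
        show ((κ i : ℕ) : ZMod p) ∈ Finset.univ.erase 1
        refine Finset.mem_erase.mpr ⟨?_, Finset.mem_univ _⟩
        intro heq
        have h1 : ((κ i : ℕ) : ZMod p).val = κ i := ZMod.val_natCast_of_lt (hκlt i)
        rw [heq, ZMod.val_one] at h1
        have := i.isLt
        simp only [hκ] at h1
        split at h1 <;> omega
      · intro k _; exact Finset.mem_univ _
      · intro i _
        have h1 : ((κ i : ℕ) : ZMod p).val = κ i := ZMod.val_natCast_of_lt (hκlt i)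
        show (⟨if ((κ i : ℕ) : ZMod p).val = 0 then 0
            else ((κ i : ℕ) : ZMod p).val - 1, _⟩ : Fin (p - 1)) = i
        apply Fin.ext
        simp only [Fin.val_mk]; rw [h1]; simp only [hκ]
        have := i.isLt
        by_cases hz : (i : ℕ) = 0 <;> simp [hz] <;> omega
      · intro k hk
        have hk1 : k ≠ 1 := (Finset.mem_erase.mp hk).1
        show (((if ((⟨if k.val = 0 then 0 else k.val - 1, _⟩ : Fin (p - 1)) : ℕ) = 0
            then 0 else ((⟨if k.val = 0 then 0 else k.val - 1, _⟩ : Fin (p - 1)) : ℕ) + 1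
            : ℕ)) : ZMod p) = k
        by_cases h0 : k.val = 0
        · have hk0 : k = 0 := by
            have : ((k.val : ℕ) : ZMod p) = k := by rw [ZMod.natCast_val, ZMod.cast_id]
            rw [← this, h0, Nat.cast_zero]
          simp [h0, hk0]
        · have hv1 : k.val ≠ 1 := by
            intro hv
            apply hk1
            have : ((k.val : ℕ) : ZMod p) = k := by rw [ZMod.natCast_val, ZMod.cast_id]
            rw [← this, hv, Nat.cast_one]
          have hne : ¬ ((if k.val = 0 then 0 else k.val - 1 : ℕ) = 0) := by
            simp only [if_neg h0]; omega
          simp only [Fin.val_mk, if_neg h0, if_neg hne]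
          have h2 : k.val - 1 + 1 = k.val := by omega
          rw [h2]
          have h3 : ¬ (k.val - 1 = 0) := by omega
          rw [if_neg h3]
          rw [ZMod.natCast_val, ZMod.cast_id]
      · intro i _
        show c i • F i (⟨x, hxM⟩ : M) =
          (φ ((κ i : ℕ) : ZMod p) - 1) • (A ((κ i : ℕ) : ZMod p)
            - A (((κ i : ℕ) : ZMod p) - 1))
        have h1 : ((κ i : ℕ) : ZMod p).val = κ i := ZMod.val_natCast_of_lt (hκlt i)
        have hs := stepa ((κ i : ℕ) : ZMod p)
        rw [h1] at hs
        rw [hFx i, hs]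
        congr 1
        simp only [hc, hφ, map_natCast]
    rw [stepd, stepc]
  -- conclude from linear independence
  have h0 := Fintype.linearIndependent_iff.mp hind c hsum ⟨0, by omega⟩
  simp only [hc, hκ] at h0
  norm_num at h0
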